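/- Let n, m ≥ 1, let L ≥ 0, let p ∈ ℝ with p ≥ 1, and let f : ℝ^n → ℝ^m satisfy ‖f(x) − f(y)‖_∞ ≤ L ‖x − y‖_∞ for all x, y ∈ ℝ^n, where ‖v‖_∞ = max_i |v_i|. Define softmax : ℝ^m → ℝ^m by softmax(z)_i = exp(z_i)/∑_j exp(z_j). Then for all x, y ∈ ℝ^n: (1/2) ∑_{i=1}^m |softmax(f(x))_i − softmax(f(y))_i| ≤ (m²/2) · L · (∑_{j=1}^n |x_j − y_j|^p)^{1/p}. -/

import Mathlib

/-!
If the logits move by at most `d` in every coordinate, each softmax probability changes by a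
factor between `exp (-2d)` and `exp (2d)`, so `|p i - q i| ≤ (1 - exp (-2d)) (p i + q i)` and the
total variation distance is at most `1 - exp (-2d) ≤ 2d`. For `m ≥ 2` this is below `(m² / 2) d`,
for `m ≤ 1` the softmax is constant, and the sup norm is dominated by every `p`-norm.
-/

open Real

noncomputable def softmax {m : ℕ} (z : Fin m → ℝ) : Fin m → ℝ :=
  fun i => Real.exp (z i) / ∑ j : Fin m, Real.exp (z j)

noncomputable def tvDist {ι : Type*} [Fintype ι] (p q : ι → ℝ) : ℝ :=
  (1 / 2) * ∑ i, |p i - q i|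

lemma iSup_abs_le_rpow_sum_rpow {ι : Type*} [Fintype ι] {p : ℝ} (hp : 0 < p) (v : ι → ℝ) :
    (⨆ i, |v i|) ≤ (∑ i, |v i| ^ p) ^ (1 / p) := by
  refine Real.iSup_le (fun i => ?_) (by positivity)
  calc |v i| = (|v i| ^ p) ^ (1 / p) := by
        rw [one_div, Real.rpow_rpow_inv (abs_nonneg _) hp.ne']
    _ ≤ (∑ j, |v j| ^ p) ^ (1 / p) := by
        gcongr
        exact Finset.single_le_sum (f := fun j => |v j| ^ p) (fun j _ => by positivity)
          (Finset.mem_univ i)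

lemma abs_sub_le_one_sub_mul_add {a b c : ℝ} (hc : 0 ≤ c) (hab : c * b ≤ a) (hba : c * a ≤ b) :
    |a - b| ≤ (1 - c) * (a + b) := by
  rcases le_total a b with h | h
  · rw [abs_of_nonpos (by linarith)]; nlinarith
  · rw [abs_of_nonneg (by linarith)]; nlinarith

section Softmax

variable {m : ℕ}

lemma sum_exp_pos [Nonempty (Fin m)] (z : Fin m → ℝ) : 0 < ∑ j, exp (z j) :=
  Finset.sum_pos (fun _ _ => exp_pos _) Finset.univ_nonempty

lemma sum_softmax [Nonempty (Fin m)] (z : Fin m → ℝ) : ∑ i, softmax z i = 1 := by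
  simp only [softmax, ← Finset.sum_div, div_self (sum_exp_pos z).ne']

lemma softmax_of_subsingleton [Subsingleton (Fin m)] (z : Fin m → ℝ) (i : Fin m) :
    softmax z i = 1 := by
  rw [softmax, Fintype.sum_subsingleton _ i, div_self (exp_ne_zero _)]

lemma exp_neg_two_mul_mul_softmax_le {a b : Fin m → ℝ} {d : ℝ} (hab : ∀ i, |a i - b i| ≤ d)
    (i : Fin m) : exp (-(2 * d)) * softmax b i ≤ softmax a i := by
  have : Nonempty (Fin m) := ⟨i⟩
  have hnum : exp (-d) * exp (b i) ≤ exp (a i) := by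
    rw [← exp_add, exp_le_exp]
    linarith [(abs_le.1 (hab i)).1]
  have hden : ∑ j, exp (a j) ≤ exp d * ∑ j, exp (b j) := by
    rw [Finset.mul_sum]
    gcongr with j
    rw [← exp_add, exp_le_exp]
    linarith [(abs_le.1 (hab j)).2]
  calc exp (-(2 * d)) * softmax b i
      = exp (-d) * exp (b i) / (exp d * ∑ j, exp (b j)) := by
        rw [softmax, mul_div_assoc', mul_div_mul_comm, ← exp_sub, ← mul_div_assoc]
        ring_nf
    _ ≤ softmax a i := div_le_div₀ (exp_pos _).le hnum (sum_exp_pos a) hden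

lemma tvDist_softmax_le_one_sub_exp [Nonempty (Fin m)] {a b : Fin m → ℝ} {d : ℝ}
    (hab : ∀ i, |a i - b i| ≤ d) : tvDist (softmax a) (softmax b) ≤ 1 - exp (-(2 * d)) := by
  have hba : ∀ i, |b i - a i| ≤ d := fun i => abs_sub_comm (a i) (b i) ▸ hab i
  have hpoint : ∀ i, |softmax a i - softmax b i|
      ≤ (1 - exp (-(2 * d))) * (softmax a i + softmax b i) := fun i =>
    abs_sub_le_one_sub_mul_add (exp_pos _).le
      (exp_neg_two_mul_mul_softmax_le hab i) (exp_neg_two_mul_mul_softmax_le hba i)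
  calc tvDist (softmax a) (softmax b)
      ≤ (1 / 2) * ∑ i, (1 - exp (-(2 * d))) * (softmax a i + softmax b i) := by
        unfold tvDist; gcongr with i; exact hpoint i
    _ = 1 - exp (-(2 * d)) := by
        rw [← Finset.mul_sum, Finset.sum_add_distrib, sum_softmax, sum_softmax]
        ring

lemma tvDist_softmax_le_two_mul_iSup [Nonempty (Fin m)] (a b : Fin m → ℝ) :
    tvDist (softmax a) (softmax b) ≤ 2 * ⨆ i, |a i - b i| := by
  have hab : ∀ i, |a i - b i| ≤ ⨆ i, |a i - b i| := fun i =>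
    le_ciSup (f := fun i => |a i - b i|) (Set.finite_range _).bddAbove i
  linarith [tvDist_softmax_le_one_sub_exp hab, add_one_le_exp (-(2 * ⨆ i, |a i - b i|))]

lemma tvDist_softmax_le_sq_div_two_mul_iSup (a b : Fin m → ℝ) :
    tvDist (softmax a) (softmax b) ≤ ((m : ℝ) ^ 2 / 2) * ⨆ i, |a i - b i| := by
  have hsup : 0 ≤ ⨆ i, |a i - b i| := Real.iSup_nonneg fun i => abs_nonneg _
  rcases le_or_gt m 1 with hm | hm
  · have : Subsingleton (Fin m) := Fin.subsingleton_iff_le_one.2 hm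
    have hzero : tvDist (softmax a) (softmax b) = 0 := by
      simp [tvDist, softmax_of_subsingleton]
    rw [hzero]
    positivity
  · have : Nonempty (Fin m) := ⟨⟨0, by omega⟩⟩
    have hm4 : (4 : ℝ) ≤ (m : ℝ) ^ 2 := by
      have : (2 : ℝ) ≤ m := by exact_mod_cast hm
      nlinarith
    calc tvDist (softmax a) (softmax b) ≤ 2 * ⨆ i, |a i - b i| :=
          tvDist_softmax_le_two_mul_iSup a b
      _ ≤ ((m : ℝ) ^ 2 / 2) * ⨆ i, |a i - b i| := by gcongr; linarith

end Softmax

theorem categorical_policy_lipschitz_general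
    (n m : ℕ) (L p : ℝ) (hL : 0 ≤ L) (hp : 1 ≤ p)
    (f : (Fin n → ℝ) → Fin m → ℝ)
    (hf : ∀ x y : Fin n → ℝ,
      (⨆ i : Fin m, |f x i - f y i|) ≤ L * ⨆ j : Fin n, |x j - y j|) :
    ∀ x y : Fin n → ℝ,
      (1 / 2) * ∑ i : Fin m, |softmax (f x) i - softmax (f y) i|
        ≤ ((m : ℝ) ^ 2 / 2) * L * (∑ j : Fin n, |x j - y j| ^ p) ^ (1 / p) := by
  intro x y
  calc tvDist (softmax (f x)) (softmax (f y))
      ≤ ((m : ℝ) ^ 2 / 2) * ⨆ i, |f x i - f y i| := tvDist_softmax_le_sq_div_two_mul_iSup _ _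
    _ ≤ ((m : ℝ) ^ 2 / 2) * (L * ⨆ j, |x j - y j|) := by gcongr; exact hf x y
    _ ≤ ((m : ℝ) ^ 2 / 2) * L * (∑ j, |x j - y j| ^ p) ^ (1 / p) := by
        rw [← mul_assoc]
        gcongr
        exact iSup_abs_le_rpow_sum_rpow (by linarith) _

/-- Lipschitzness of a categorical policy: a network `f` that is `L`-Lipschitz
with respect to sup norms, followed by a softmax output layer, is
`(m²/2)·L`-Lipschitz from the input `p`-norm to total variation distance. -/
theorem categorical_policy_lipschitz
    (n m : ℕ) (hn : 1 ≤ n) (hm : 1 ≤ m) (L p : ℝ) (hL : 0 ≤ L) (hp : 1 ≤ p)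
    (f : (Fin n → ℝ) → Fin m → ℝ)
    (hf : ∀ x y : Fin n → ℝ,
      (⨆ i : Fin m, |f x i - f y i|) ≤ L * ⨆ j : Fin n, |x j - y j|) :
    ∀ x y : Fin n → ℝ,
      (1 / 2) * ∑ i : Fin m, |softmax (f x) i - softmax (f y) i|
        ≤ ((m : ℝ) ^ 2 / 2) * L * (∑ j : Fin n, |x j - y j| ^ p) ^ (1 / p) :=
  categorical_policy_lipschitz_general n m L p hL hp f hf
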